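/- Let A ∈ ℝ^{m×l×n}, X⋆ ∈ ℝ^{l×p×n}, B⋆ = A∗X⋆, and B = B⋆ + B_corr ∈ ℝ^{m×p×n}, where the corruption set C = {(i,j,h) : (B_corr)_{ijh} ≠ 0} has size |C| = β·mpn. Let 0 < q < 1 − β. Suppose X ∈ ℝ^{l×p×n} is the current iterate, E = A∗X − B, and i ∈ [m] is a row index such that M_i M_iᵀ is invertible and |E_{ijh}| < Q_q(E) for all j ∈ [p] and h ∈ [n]. Let X⁺ be the Kaczmarz update of X at row i. Then ‖X⁺ − X⋆‖_F ≤ ‖X − X⋆‖_F · (1 + σ_max(bcirc(A))·η / √(m(1−β−q))), where η = max_{i∈[m]} σ_max(M_iᵀ(M_iM_iᵀ)^{-1}). -/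

import Mathlib

open scoped BigOperators
open Matrix

/-- A real third-order tensor of size `a × b × c` (zero-indexed). -/
abbrev Tensor (a b c : ℕ) := Fin a → Fin b → Fin c → ℝ

/-- Frobenius norm of a third-order tensor: the square root of the sum of
squares of all entries. -/
noncomputable def frob {a b c : ℕ} (X : Tensor a b c) : ℝ :=
  Real.sqrt (∑ i, ∑ j, ∑ k, (X i j k) ^ 2)

/-- The block-circulant matrix of a third-order tensor: the `(r, s)` block is
the frontal slice of index `r - s (mod c)` (zero-indexed). -/
def bcirc {a b c : ℕ} (A : Tensor a b c) : Matrix (Fin c × Fin a) (Fin c × Fin b) ℝ :=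
  fun ri sj => A ri.2 sj.2 (ri.1 - sj.1)

/-- Unfolding: stack the frontal slices of a tensor vertically into a matrix. -/
def unfoldT {a b c : ℕ} (X : Tensor a b c) : Matrix (Fin c × Fin a) (Fin b) ℝ :=
  fun ki j => X ki.2 j ki.1

/-- The t-product of two third-order tensors:
`A ∗ X = fold (bcirc A * unfold X)`. -/
noncomputable def tMul {a b c d : ℕ} (A : Tensor a b c) (X : Tensor b d c) : Tensor a d c :=
  fun i j k => (bcirc A * unfoldT X) (k, i) j

/-- The largest singular value of a real matrix: the square root of the largest
eigenvalue of the symmetric positive semidefinite matrix `Mᵀ * M`. -/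
noncomputable def sigmaMax {ι κ : Type*} [Fintype ι] [Fintype κ] [DecidableEq κ]
    (M : Matrix ι κ ℝ) : ℝ :=
  Real.sqrt (⨆ i, (by simpa [Matrix.conjTranspose_eq_transpose_of_trivial] using
      Matrix.isHermitian_conjTranspose_mul_self M :
    (Mᵀ * M).IsHermitian).eigenvalues i)

/-- The empirical `q`-quantile of the absolute values of the entries of a
third-order tensor: the `⌊q · abc⌋`-th smallest element (1-indexed) of the
multiset `{|E i j k|}`. -/
noncomputable def quantile {a b c : ℕ} (q : ℝ) (E : Tensor a b c) : ℝ :=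
  (((Finset.univ : Finset (Fin a × Fin b × Fin c)).val.map
      (fun t => |E t.1 t.2.1 t.2.2|)).sort (· ≤ ·)).getD
    (⌊q * ((a * b * c : ℕ) : ℝ)⌋.toNat - 1) 0

/-- The `i`-th horizontal (row) slice of a tensor, as a `1 × b × c` tensor. -/
def rowSlice {a b c : ℕ} (A : Tensor a b c) (i : Fin a) : Tensor 1 b c :=
  fun _ j k => A i j k

/-- The (tensor) Kaczmarz update of `X` at row slice `i`, for the system
`A ∗ X = B`:  `unfold X⁺ = unfold X - Mᵢᵀ (Mᵢ Mᵢᵀ)⁻¹ (Mᵢ · unfold X - unfold Bᵢ)`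
where `Mᵢ = bcirc (Aᵢ::)`. -/
noncomputable def kUpdate {m l p n : ℕ} (A : Tensor m l n) (B : Tensor m p n)
    (X : Tensor l p n) (i : Fin m) : Tensor l p n :=
  fun a j k =>
    X a j k -
      ((bcirc (rowSlice A i))ᵀ * (bcirc (rowSlice A i) * (bcirc (rowSlice A i))ᵀ)⁻¹ *
        (bcirc (rowSlice A i) * unfoldT X - unfoldT (rowSlice B i))) (k, a) j

/-- The quantity `η = maxᵢ σ_max(Mᵢᵀ (Mᵢ Mᵢᵀ)⁻¹)` where `Mᵢ = bcirc (Aᵢ::)`. -/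
noncomputable def eta {m l n : ℕ} (A : Tensor m l n) : ℝ :=
  ⨆ i : Fin m, sigmaMax ((bcirc (rowSlice A i))ᵀ *
    (bcirc (rowSlice A i) * (bcirc (rowSlice A i))ᵀ)⁻¹)

/-!
Write `D = X - X⋆` and `Q = Q_q(E)`, so that `E = A ∗ X - B = A ∗ D - B_corr`. At least
`(1 - q)mpn` entries of `E` have modulus `≥ Q` and at most `βmpn` are corrupted, so at least
`(1 - β - q)mpn` entries of `A ∗ D` have modulus `≥ Q`; hence
`(1 - β - q)mpn Q² ≤ ‖A ∗ D‖² ≤ σ_max(bcirc A)² ‖D‖²`. On the other hand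
`unfold (X⁺ - X⋆) = unfold D - Mᵢᵀ(MᵢMᵢᵀ)⁻¹ Rᵢ`, where the residual `Rᵢ` of row `i` has `np`
entries, all of modulus `< Q`, so the correction has norm at most `η √(np) Q`. Eliminating `Q`
and using the triangle inequality gives the bound.
-/

theorem Matrix.IsHermitian.dotProduct_mulVec_le_iSup_eigenvalues {n : Type*} [Fintype n]
    [DecidableEq n] {H : Matrix n n ℝ} (hH : H.IsHermitian) (v : n → ℝ) :
    v ⬝ᵥ H *ᵥ v ≤ (⨆ i, hH.eigenvalues i) * (v ⬝ᵥ v) := by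
  set b := hH.eigenvectorBasis
  have parseval (x y : n → ℝ) : ∑ i, (b i ⬝ᵥ x) * (b i ⬝ᵥ y) = x ⬝ᵥ y := by
    simpa [EuclideanSpace.inner_eq_star_dotProduct, dotProduct_comm] using
      b.sum_inner_mul_inner (WithLp.toLp 2 x) (WithLp.toLp 2 y)
  have coeff (i : n) : b i ⬝ᵥ H *ᵥ v = hH.eigenvalues i * (b i ⬝ᵥ v) := by
    have hsymm : b i ᵥ* H = H *ᵥ b i := by
      rw [← vecMul_transpose, ← conjTranspose_eq_transpose_of_trivial, hH.eq]
    rw [dotProduct_mulVec, hsymm, hH.mulVec_eigenvectorBasis, smul_dotProduct, smul_eq_mul]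
  have hbdd : BddAbove (Set.range hH.eigenvalues) := (Set.finite_range _).bddAbove
  calc v ⬝ᵥ H *ᵥ v = ∑ i, hH.eigenvalues i * (b i ⬝ᵥ v) ^ 2 := by
        rw [← parseval]; simp only [coeff]; exact Finset.sum_congr rfl fun i _ => by ring
    _ ≤ ∑ i, (⨆ j, hH.eigenvalues j) * (b i ⬝ᵥ v) ^ 2 :=
        Finset.sum_le_sum fun i _ => mul_le_mul_of_nonneg_right (le_ciSup hbdd i) (sq_nonneg _)
    _ = (⨆ i, hH.eigenvalues i) * (v ⬝ᵥ v) := by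
        rw [← Finset.mul_sum, ← parseval]; simp only [sq]

attribute [local instance] Matrix.frobeniusNormedAddCommGroup

section Frobenius

variable {ι κ : Type*} [Fintype ι] [Fintype κ]

theorem frobenius_norm_sq_eq_sum (M : Matrix ι κ ℝ) : ‖M‖ ^ 2 = ∑ i, ∑ j, M i j ^ 2 := by
  rw [frobenius_norm_def, ← Real.sqrt_eq_rpow, Real.sq_sqrt (by positivity)]
  simp only [Real.rpow_two, Real.norm_eq_abs, sq_abs]

theorem frobenius_norm_sq_le_of_abs_le {M : Matrix ι κ ℝ} {c : ℝ} (h : ∀ i j, |M i j| ≤ c) :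
    ‖M‖ ^ 2 ≤ Fintype.card ι * Fintype.card κ * c ^ 2 := by
  calc ‖M‖ ^ 2 = ∑ i, ∑ j, |M i j| ^ 2 := by simp only [frobenius_norm_sq_eq_sum, sq_abs]
    _ ≤ ∑ _i : ι, ∑ _j : κ, c ^ 2 :=
        Finset.sum_le_sum fun i _ => Finset.sum_le_sum fun j _ =>
          pow_le_pow_left₀ (abs_nonneg _) (h i j) 2
    _ = Fintype.card ι * Fintype.card κ * c ^ 2 := by simp [mul_assoc]

end Frobenius

section SingularValue

variable {ι κ ρ : Type*} [Fintype ι] [Fintype κ] [DecidableEq κ] [Fintype ρ]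

theorem sigmaMax_nonneg (M : Matrix ι κ ℝ) : 0 ≤ sigmaMax M := Real.sqrt_nonneg _

theorem sum_sq_mulVec_le_sigmaMax_sq (M : Matrix ι κ ℝ) (v : κ → ℝ) :
    ∑ i, (M *ᵥ v) i ^ 2 ≤ sigmaMax M ^ 2 * ∑ k, v k ^ 2 := by
  have hpsd : (Mᵀ * M).PosSemidef := by
    simpa only [conjTranspose_eq_transpose_of_trivial] using posSemidef_conjTranspose_mul_self M
  have hsq : sigmaMax M ^ 2 = ⨆ k, hpsd.1.eigenvalues k :=
    Real.sq_sqrt (Real.iSup_nonneg hpsd.eigenvalues_nonneg)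
  calc ∑ i, (M *ᵥ v) i ^ 2 = v ⬝ᵥ (Mᵀ * M) *ᵥ v := by
        rw [← mulVec_mulVec, dotProduct_mulVec, vecMul_transpose]; simp only [dotProduct, sq]
    _ ≤ (⨆ k, hpsd.1.eigenvalues k) * (v ⬝ᵥ v) := hpsd.1.dotProduct_mulVec_le_iSup_eigenvalues v
    _ = sigmaMax M ^ 2 * ∑ k, v k ^ 2 := by rw [hsq]; simp only [dotProduct, sq]

theorem frobenius_norm_mul_le_sigmaMax_mul (M : Matrix ι κ ℝ) (N : Matrix κ ρ ℝ) :
    ‖M * N‖ ≤ sigmaMax M * ‖N‖ := by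
  refine le_of_pow_le_pow_left₀ two_ne_zero (mul_nonneg (sigmaMax_nonneg M) (norm_nonneg _)) ?_
  rw [mul_pow, frobenius_norm_sq_eq_sum, frobenius_norm_sq_eq_sum, Finset.sum_comm,
    Finset.sum_comm (f := fun k j => N k j ^ 2), Finset.mul_sum]
  exact Finset.sum_le_sum fun j _ => sum_sq_mulVec_le_sigmaMax_sq M (fun k => N k j)

end SingularValue

open Finset in
theorem Finset.card_sub_card_mul_sq_le_sum_sq {α : Type*} [Fintype α] [DecidableEq α]
    (f g : α → ℝ) {Q : ℝ} (hQ : 0 ≤ Q) :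
    (((univ.filter fun t => Q ≤ |f t - g t|).card : ℝ) - (univ.filter fun t => g t ≠ 0).card) *
      Q ^ 2 ≤ ∑ t, f t ^ 2 := by
  set S := univ.filter fun t => Q ≤ |f t - g t|
  set C := univ.filter fun t => g t ≠ 0
  have hcard : (S.card : ℝ) - C.card ≤ (S \ C).card := by
    have := card_le_card_sdiff_add_card (s := S) (t := C)
    rw [sub_le_iff_le_add]; exact_mod_cast this
  have hclean : ∀ t ∈ S \ C, Q ^ 2 ≤ f t ^ 2 := by
    intro t ht
    simp only [S, C, mem_sdiff, mem_filter, mem_univ, true_and, not_not] at ht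
    have := pow_le_pow_left₀ hQ ht.1 2
    rwa [ht.2, sub_zero, sq_abs] at this
  calc ((S.card : ℝ) - C.card) * Q ^ 2 ≤ (S \ C).card * Q ^ 2 :=
        mul_le_mul_of_nonneg_right hcard (sq_nonneg Q)
    _ = ∑ _t ∈ S \ C, Q ^ 2 := by rw [sum_const, nsmul_eq_mul]
    _ ≤ ∑ t ∈ S \ C, f t ^ 2 := sum_le_sum hclean
    _ ≤ ∑ t, f t ^ 2 := sum_le_sum_of_subset_of_nonneg (subset_univ _) fun _ _ _ => sq_nonneg _

theorem List.length_le_countP_getD_le_add {l : List ℝ} (hl : l.Pairwise (· ≤ ·)) (k : ℕ) :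
    l.length ≤ l.countP (fun x => l.getD k 0 ≤ x) + k := by
  rcases le_or_gt l.length k with hk | hk
  · omega
  have hdrop : ∀ x ∈ l.drop k, l.getD k 0 ≤ x := by
    intro x hx
    obtain ⟨j, hj, rfl⟩ := List.getElem_of_mem hx
    rw [List.getElem_drop, List.getD_eq_getElem l 0 hk]
    rcases Nat.eq_zero_or_pos j with rfl | hj0
    · simp
    · exact List.pairwise_iff_getElem.mp hl k (k + j) hk (by simp at hj; omega) (by omega)
  have hcount : (l.drop k).countP (fun x => l.getD k 0 ≤ x) = l.length - k := by
    rw [List.countP_eq_length.mpr (by simpa using hdrop), List.length_drop]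
  have := (List.drop_sublist k l).countP_le (p := fun x => l.getD k 0 ≤ x)
  omega

theorem Fintype.card_le_card_filter_sort_getD_le_add {α : Type*} [Fintype α] (f : α → ℝ) (k : ℕ) :
    Fintype.card α ≤
      (Finset.univ.filter fun t => ((Finset.univ.val.map f).sort (· ≤ ·)).getD k 0 ≤ f t).card +
        k := by
  set s := (Finset.univ.val.map f).sort (· ≤ ·)
  have hcard : (Finset.univ.filter fun t => s.getD k 0 ≤ f t).card
      = s.countP (fun x => s.getD k 0 ≤ x) := by
    rw [Finset.card_def, Finset.filter_val, ← Multiset.coe_countP, Multiset.sort_eq,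
      Multiset.countP_map]
  have hlen : s.length = Fintype.card α := by
    rw [Multiset.length_sort, Multiset.card_map, Finset.card_val, Finset.card_univ]
  rw [hcard, ← hlen]
  exact List.length_le_countP_getD_le_add (Multiset.pairwise_sort _ _) k

section Tensor

variable {a b c : ℕ}

theorem quantile_nonneg (q : ℝ) (E : Tensor a b c) : 0 ≤ quantile q E := by
  unfold quantile
  set l := ((Finset.univ : Finset (Fin a × Fin b × Fin c)).val.map
    (fun t => |E t.1 t.2.1 t.2.2|)).sort (· ≤ ·)
  set k := ⌊q * ((a * b * c : ℕ) : ℝ)⌋.toNat - 1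
  rcases lt_or_ge k l.length with hk | hk
  · obtain ⟨t, -, ht⟩ := Multiset.mem_map.mp ((Multiset.mem_sort _).mp (List.getElem_mem hk))
    rw [List.getD_eq_getElem _ _ hk, ← ht]
    exact abs_nonneg _
  · rw [List.getD_eq_default _ _ hk]

theorem one_sub_mul_le_card_quantile_le {q : ℝ} (hq : 0 ≤ q) (E : Tensor a b c) :
    (1 - q) * (a * b * c) ≤
      ((Finset.univ.filter fun t : Fin a × Fin b × Fin c =>
        quantile q E ≤ |E t.1 t.2.1 t.2.2|).card : ℝ) := by
  set S := Finset.univ.filter fun t : Fin a × Fin b × Fin c => quantile q E ≤ |E t.1 t.2.1 t.2.2|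
  -- `quantile q E` sits at position `k` of the sorted list; `toNat` and the truncated
  -- subtraction can only lower `k` below `q * abc`.
  set k := ⌊q * ((a * b * c : ℕ) : ℝ)⌋.toNat - 1
  have hk : (k : ℝ) ≤ q * ((a * b * c : ℕ) : ℝ) := by
    calc (k : ℝ) ≤ (⌊q * ((a * b * c : ℕ) : ℝ)⌋.toNat : ℤ) := by exact_mod_cast Nat.sub_le _ _
      _ = ⌊q * ((a * b * c : ℕ) : ℝ)⌋ := by
          rw [Int.toNat_of_nonneg (Int.floor_nonneg.mpr (by positivity))]
      _ ≤ q * ((a * b * c : ℕ) : ℝ) := Int.floor_le _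
  have hcount : a * b * c ≤ S.card + k := by
    have h := Fintype.card_le_card_filter_sort_getD_le_add
      (fun t : Fin a × Fin b × Fin c => |E t.1 t.2.1 t.2.2|) k
    rw [Fintype.card_prod, Fintype.card_prod, Fintype.card_fin, Fintype.card_fin,
      Fintype.card_fin, ← mul_assoc] at h
    exact h
  have hcountR : ((a * b * c : ℕ) : ℝ) ≤ S.card + k := by exact_mod_cast hcount
  push_cast at hcountR hk
  linarith

theorem frob_nonneg (X : Tensor a b c) : 0 ≤ frob X := Real.sqrt_nonneg _

theorem frob_eq_norm_unfoldT (X : Tensor a b c) : frob X = ‖unfoldT X‖ := by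
  rw [frob, ← Real.sqrt_sq (norm_nonneg (unfoldT X)), frobenius_norm_sq_eq_sum,
    Fintype.sum_prod_type]
  congr 1
  conv_rhs => rw [Finset.sum_comm]
  exact Finset.sum_congr rfl fun i _ => Finset.sum_comm

theorem frob_sq_eq_sum (X : Tensor a b c) :
    frob X ^ 2 = ∑ t : Fin a × Fin b × Fin c, X t.1 t.2.1 t.2.2 ^ 2 := by
  rw [frob, Real.sq_sqrt (by positivity), Fintype.sum_prod_type]
  simp only [Fintype.sum_prod_type]

theorem unfoldT_sub (X Y : Tensor a b c) : unfoldT (X - Y) = unfoldT X - unfoldT Y := rfl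

theorem unfoldT_tMul {d : ℕ} (A : Tensor a b c) (X : Tensor b d c) :
    unfoldT (tMul A X) = bcirc A * unfoldT X := rfl

theorem tMul_sub {d : ℕ} (A : Tensor a b c) (X Y : Tensor b d c) :
    tMul A (X - Y) = tMul A X - tMul A Y := by
  funext i j k
  simp only [tMul, unfoldT_sub, Matrix.mul_sub, Matrix.sub_apply, Pi.sub_apply]

theorem frob_tMul_le {d : ℕ} (A : Tensor a b c) (X : Tensor b d c) :
    frob (tMul A X) ≤ sigmaMax (bcirc A) * frob X := by
  simpa only [frob_eq_norm_unfoldT, unfoldT_tMul] using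
    frobenius_norm_mul_le_sigmaMax_mul (bcirc A) (unfoldT X)

theorem mul_sq_quantile_sub_le_frob_sq {F G : Tensor a b c} {β q : ℝ}
    (hβ : ((Finset.univ.filter
        (fun t : Fin a × Fin b × Fin c => G t.1 t.2.1 t.2.2 ≠ 0)).card : ℝ) = β * (a * b * c))
    (hq : 0 ≤ q) :
    (1 - β - q) * (a * b * c) * quantile q (F - G) ^ 2 ≤ frob F ^ 2 := by
  have hcount := one_sub_mul_le_card_quantile_le hq (F - G)
  have henergy := Finset.card_sub_card_mul_sq_le_sum_sq (fun t : Fin a × Fin b × Fin c =>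
    F t.1 t.2.1 t.2.2) (fun t => G t.1 t.2.1 t.2.2) (quantile_nonneg q (F - G))
  rw [hβ, ← frob_sq_eq_sum] at henergy
  calc (1 - β - q) * (a * b * c) * quantile q (F - G) ^ 2
      = ((1 - q) * (a * b * c) - β * (a * b * c)) * quantile q (F - G) ^ 2 := by ring
    _ ≤ frob F ^ 2 := le_trans (by gcongr; exact hcount) henergy

end Tensor

section Kaczmarz

variable {m l p n : ℕ} (A : Tensor m l n) (B : Tensor m p n) (X : Tensor l p n) (i : Fin m)

noncomputable def rowPinv : Matrix (Fin n × Fin l) (Fin n × Fin 1) ℝ :=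
  (bcirc (rowSlice A i))ᵀ * (bcirc (rowSlice A i) * (bcirc (rowSlice A i))ᵀ)⁻¹

noncomputable def rowResidual : Matrix (Fin n × Fin 1) (Fin p) ℝ :=
  bcirc (rowSlice A i) * unfoldT X - unfoldT (rowSlice B i)

theorem rowResidual_apply (r : Fin n × Fin 1) (j : Fin p) :
    rowResidual A B X i r j = (tMul A X - B) i j r.1 := rfl

theorem norm_rowResidual_sq_le {Q : ℝ} (h : ∀ j k, |(tMul A X - B) i j k| ≤ Q) :
    ‖rowResidual A B X i‖ ^ 2 ≤ n * p * Q ^ 2 := by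
  have := frobenius_norm_sq_le_of_abs_le (M := rowResidual A B X i) (c := Q) fun r j => by
    rw [rowResidual_apply]; exact h j r.1
  simpa only [Fintype.card_prod, Fintype.card_fin, Nat.cast_mul, Nat.cast_one, mul_one] using this

theorem unfoldT_kUpdate_sub (Xstar : Tensor l p n) :
    unfoldT (kUpdate A B X i - Xstar) =
      unfoldT (X - Xstar) - rowPinv A i * rowResidual A B X i := by
  funext r j
  simp only [unfoldT, kUpdate, rowPinv, rowResidual, Pi.sub_apply, Matrix.sub_apply]
  ring

theorem sigmaMax_rowPinv_le_eta : sigmaMax (rowPinv A i) ≤ eta A :=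
  le_ciSup (f := fun i => sigmaMax (rowPinv A i)) (Set.finite_range _).bddAbove i

theorem eta_nonneg : 0 ≤ eta A := Real.iSup_nonneg fun _ => sigmaMax_nonneg _

theorem frob_kUpdate_sub_le (Xstar : Tensor l p n) :
    frob (kUpdate A B X i - Xstar) ≤ frob (X - Xstar) + eta A * ‖rowResidual A B X i‖ := by
  rw [frob_eq_norm_unfoldT, frob_eq_norm_unfoldT, unfoldT_kUpdate_sub]
  refine (norm_sub_le _ _).trans ?_
  gcongr
  exact (frobenius_norm_mul_le_sigmaMax_mul _ _).trans
    (mul_le_mul_of_nonneg_right (sigmaMax_rowPinv_le_eta A i) (norm_nonneg _))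

end Kaczmarz

theorem le_div_sqrt_of_sq_mul_le {x y κ : ℝ} (hy : 0 ≤ y) (hκ : 0 < κ) (h : x ^ 2 * κ ≤ y ^ 2) :
    x ≤ y / Real.sqrt κ := by
  rw [le_div_iff₀ (Real.sqrt_pos.mpr hκ)]
  refine le_of_pow_le_pow_left₀ two_ne_zero hy ?_
  rwa [mul_pow, Real.sq_sqrt hκ.le]

theorem corrupted_row_update_bound_general {m l p n : ℕ} (A : Tensor m l n)
    (Xstar : Tensor l p n) (Bcorr B : Tensor m p n)
    (hB : B = tMul A Xstar + Bcorr) (β q : ℝ)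
    (hβ : ((Finset.univ.filter
        (fun t : Fin m × Fin p × Fin n => Bcorr t.1 t.2.1 t.2.2 ≠ 0)).card : ℝ)
      = β * (m * p * n))
    (hq0 : 0 < q) (hq1 : q < 1 - β)
    (X : Tensor l p n) (i : Fin m)
    (hflag : ∀ (j : Fin p) (h : Fin n),
      |(tMul A X - B) i j h| < quantile q (tMul A X - B)) :
    frob (kUpdate A B X i - Xstar) ≤
      frob (X - Xstar) *
        (1 + sigmaMax (bcirc A) * eta A / Real.sqrt (m * (1 - β - q))) := by
  set Q := quantile q (tMul A X - B) with hQ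
  set σ := sigmaMax (bcirc A)
  have hκ : 0 < (m : ℝ) * (1 - β - q) := mul_pos (Nat.cast_pos.mpr i.pos) (by linarith)
  have hclean : (1 - β - q) * (m * p * n) * Q ^ 2 ≤ (σ * frob (X - Xstar)) ^ 2 := by
    have hE : tMul A X - B = tMul A (X - Xstar) - Bcorr := by rw [hB, tMul_sub]; abel
    rw [hQ, hE]
    exact (mul_sq_quantile_sub_le_frob_sq hβ hq0.le).trans
      (pow_le_pow_left₀ (frob_nonneg _) (frob_tMul_le A _) 2)
  have hrow := norm_rowResidual_sq_le A B X i fun j k => (hflag j k).le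
  have hR : ‖rowResidual A B X i‖ ≤ σ * frob (X - Xstar) / Real.sqrt (m * (1 - β - q)) := by
    refine le_div_sqrt_of_sq_mul_le (mul_nonneg (sigmaMax_nonneg _) (frob_nonneg _)) hκ ?_
    calc ‖rowResidual A B X i‖ ^ 2 * (m * (1 - β - q)) ≤ n * p * Q ^ 2 * (m * (1 - β - q)) :=
          mul_le_mul_of_nonneg_right hrow hκ.le
      _ = (1 - β - q) * (m * p * n) * Q ^ 2 := by ring
      _ ≤ _ := hclean
  calc frob (kUpdate A B X i - Xstar) ≤ frob (X - Xstar) + eta A * ‖rowResidual A B X i‖ :=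
        frob_kUpdate_sub_le A B X i Xstar
    _ ≤ frob (X - Xstar) + eta A * (σ * frob (X - Xstar) / Real.sqrt (m * (1 - β - q))) := by
        gcongr; exact eta_nonneg A
    _ = frob (X - Xstar) * (1 + σ * eta A / Real.sqrt (m * (1 - β - q))) := by ring

/-- Corrupted row selected: if row `i` passes the quantile test
(`|Eᵢⱼₕ| < Q_q(E)` for all `j, h`) and `Mᵢ Mᵢᵀ` is invertible, then the Kaczmarz
update at row `i` satisfies
`‖X⁺ - X⋆‖_F ≤ ‖X - X⋆‖_F (1 + σ_max(bcirc A) η / √(m(1-β-q)))`. -/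
theorem corrupted_row_update_bound {m l p n : ℕ} (A : Tensor m l n)
    (Xstar : Tensor l p n) (Bcorr B : Tensor m p n)
    (hB : B = tMul A Xstar + Bcorr) (β q : ℝ)
    (hβ : ((Finset.univ.filter
        (fun t : Fin m × Fin p × Fin n => Bcorr t.1 t.2.1 t.2.2 ≠ 0)).card : ℝ)
      = β * (m * p * n))
    (hq0 : 0 < q) (hq1 : q < 1 - β)
    (X : Tensor l p n) (i : Fin m)
    (hinv : IsUnit (bcirc (rowSlice A i) * (bcirc (rowSlice A i))ᵀ).det)
    (hflag : ∀ (j : Fin p) (h : Fin n),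
      |(tMul A X - B) i j h| < quantile q (tMul A X - B)) :
    frob (kUpdate A B X i - Xstar) ≤
      frob (X - Xstar) *
        (1 + sigmaMax (bcirc A) * eta A / Real.sqrt (m * (1 - β - q))) :=
  corrupted_row_update_bound_general A Xstar Bcorr B hB β q hβ hq0 hq1 X i hflag
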